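/- For the hyperboloid model with metric g_{11} = r r†, g_{ab} = δ_{ab} r r† sinh² u^1 ∏_{c=2}^a sin² u^{c−1} (a ≥ 2) and constant mixture curvature −1/(r r†), the function ν(u) = 1/(|sinh u^1| ∏_{a=2}^m |sin u^a|) satisfies the gauge equation ∂_a s_b − Γ^{(−1)c}_{ab} s_c − s_a s_b = −(1/(r r†)) g_{ab}, where s_a = ∂_a log ν. -/

import Mathlib

/-!
The map `ξ` parametrises the hyperboloid `⟨ξ, ξ⟩ = -1` of Minkowski space in spherical
coordinates. Since `θ = r Jξ` with `J = diag(-1, 1, …, 1)` and `η = r† ξ`, the connection is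
`Γ_{abc} = r r† ⟨∂_a∂_b ξ, ∂_c ξ⟩` and the metric is `g_{ab} = r r† ⟨∂_a ξ, ∂_b ξ⟩`, which is
diagonal. Differentiating `⟨ξ, ξ⟩ = -1` gives `⟨ξ, ∂_b ξ⟩ = 0` and
`⟨ξ, ∂_a∂_b ξ⟩ = -⟨∂_a ξ, ∂_b ξ⟩`, so expanding `∂_a∂_b ξ` in the orthogonal frame
`(ξ, ∂_0 ξ, …, ∂_{m-1} ξ)` gives the Gauss formula `∂_a∂_b ξ = ĝ_{ab} ξ + Γ^c_{ab} ∂_c ξ` with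
`ĝ = g / (r r†)`. As `ν = 1 / |ξ_m|`, we have `s_a = -∂_a ξ_m / ξ_m`, and the last component of
the Gauss formula turns the left-hand side of the gauge equation into
`-(∂_a∂_b ξ_m - Γ^c_{ab} ∂_c ξ_m) / ξ_m = -ĝ_{ab}`.
-/

noncomputable def pd {m : ℕ} (i : Fin m) (f : (Fin m → ℝ) → ℝ) (x : Fin m → ℝ) : ℝ :=
  fderiv ℝ f x (Pi.single i 1)

open Real Finset
open scoped ContDiff

open Matrix in
theorem eq_sum_smul_of_orthogonal {ι K : Type*} [Fintype ι] [DecidableEq ι] [Field K]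
    (ε : ι → K) (v : ι → ι → K) (d : ι → K)
    (hv : ∀ i k, ∑ j, ε j * (v i j * v k j) = if i = k then d i else 0) (hd : ∀ i, d i ≠ 0)
    (x : ι → K) :
    x = ∑ i, ((d i)⁻¹ * ∑ j, ε j * (x j * v i j)) • v i := by
  set M := Matrix.of v
  have hgram : M * diagonal ε * Mᵀ = diagonal d := by
    ext i k
    rw [mul_apply, diagonal_apply, ← hv]
    exact sum_congr rfl fun j _ => by simp [M, mul_diagonal]; ring
  -- `Mᵀ (diagonal d)⁻¹` is a right inverse of `M (diagonal ε)`, hence also a left inverse.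
  have hinv : Mᵀ * diagonal d⁻¹ * (M * diagonal ε) = 1 := by
    refine mul_eq_one_comm.mp ?_
    rw [← Matrix.mul_assoc, hgram, diagonal_mul_diagonal, ← diagonal_one]
    exact congrArg diagonal (funext fun i => mul_inv_cancel₀ (hd i))
  calc x = (Mᵀ * diagonal d⁻¹ * (M * diagonal ε)) *ᵥ x := by rw [hinv, one_mulVec]
    _ = _ := by
      rw [← mulVec_mulVec, ← mulVec_mulVec, ← mulVec_mulVec]
      ext j
      simp only [mulVec, dotProduct, transpose_apply, M, of_apply, Finset.sum_apply, Pi.smul_apply,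
        smul_eq_mul, diagonal_apply, ite_mul, zero_mul, sum_ite_eq, mem_univ, if_true,
        Pi.inv_apply]
      exact sum_congr rfl fun i _ => by
        rw [mul_comm (v i j)]; congr 2; exact sum_congr rfl fun k _ => by ring

section PartialDerivative

variable {m : ℕ}

theorem pd_const_mul (c : ℝ) (f : (Fin m → ℝ) → ℝ) (a : Fin m) :
    pd a (fun v => c * f v) = fun v => c * pd a f v := by
  ext v
  rw [pd, show (fun v => c * f v) = c • f from rfl, fderiv_const_smul_field]
  rfl

theorem pd_neg (f : (Fin m → ℝ) → ℝ) (a : Fin m) : pd a (fun v => -f v) = fun v => -pd a f v := by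
  ext v
  rw [pd, fderiv_fun_neg]
  rfl

theorem pd_const (c : ℝ) (a : Fin m) (u : Fin m → ℝ) : pd a (fun _ => c) u = 0 := by
  simp [pd]

theorem HasFDerivAt.pd_eq {f : (Fin m → ℝ) → ℝ} {f' : (Fin m → ℝ) →L[ℝ] ℝ} {u : Fin m → ℝ}
    (h : HasFDerivAt f f' u) (a : Fin m) : pd a f u = f' (Pi.single a 1) := by
  rw [pd, h.fderiv]

theorem differentiable_pd {f : (Fin m → ℝ) → ℝ} (hf : ContDiff ℝ 2 f) (a : Fin m) :
    Differentiable ℝ (pd a f) :=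
  ((hf.fderiv_right (m := 1) le_rfl).differentiable one_ne_zero).clm_apply
    (differentiable_const _)

theorem pd_log {f : (Fin m → ℝ) → ℝ} {u : Fin m → ℝ} (hf : DifferentiableAt ℝ f u)
    (hu : f u ≠ 0) (a : Fin m) : pd a (fun v => log (f v)) u = pd a f u / f u := by
  rw [(hf.hasFDerivAt.log hu).pd_eq, pd]
  simp [div_eq_inv_mul]

theorem pd_pd_log {f : (Fin m → ℝ) → ℝ} {u : Fin m → ℝ} (hf : ContDiff ℝ 2 f) (hu : f u ≠ 0)
    (a b : Fin m) :
    pd a (pd b fun v => log (f v)) u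
      = pd a (pd b f) u / f u - pd a f u * pd b f u / f u ^ 2 := by
  have hdiff : Differentiable ℝ f := hf.differentiable two_ne_zero
  have hev : pd b (fun v => log (f v)) =ᶠ[nhds u] fun v => pd b f v * (f v)⁻¹ :=
    (hf.continuous.continuousAt.eventually_ne hu).mono fun v hv => by
      rw [pd_log (hdiff v) hv b, div_eq_mul_inv]
  have hquot : HasFDerivAt (fun v => pd b f v * (f v)⁻¹) _ u :=
    (differentiable_pd hf b u).hasFDerivAt.fun_mul
      ((hasDerivAt_inv hu).comp_hasFDerivAt u (hdiff u).hasFDerivAt)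
  rw [pd, hev.fderiv_eq, hquot.fderiv]
  simp only [add_apply, smul_apply, smul_eq_mul]
  rw [← pd, ← pd]
  field_simp
  ring

theorem gauge_equation_of_pd_pd_eq {f : (Fin m → ℝ) → ℝ} {u : Fin m → ℝ} (hf : ContDiff ℝ 2 f)
    (hu : f u ≠ 0) {s : Fin m → (Fin m → ℝ) → ℝ} (hs : ∀ c, s c = pd c fun v => -log (f v))
    {a b : Fin m} {G : ℝ} {C : Fin m → ℝ}
    (hab : pd a (pd b f) u = G * f u + ∑ c, C c * pd c f u) :
    pd a (s b) u - ∑ c, C c * s c u - s a u * s b u = -G := by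
  simp only [hs, pd_neg, pd_log ((hf.differentiable two_ne_zero) u) hu, pd_pd_log hf hu, hab]
  have hsum : ∑ c, C c * -(pd c f u / f u) = -(∑ c, C c * pd c f u) / f u := by
    rw [neg_div, sum_div, ← sum_neg_distrib]
    exact sum_congr rfl fun c _ => by ring
  rw [hsum]
  field_simp
  ring

end PartialDerivative

section SepProd

variable {m : ℕ}

noncomputable def sepProd (f : Fin m → ℝ → ℝ) (u : Fin m → ℝ) : ℝ := ∏ e, f e (u e)

theorem sepProd_update (f : Fin m → ℝ → ℝ) (a : Fin m) (φ : ℝ → ℝ) (u : Fin m → ℝ) :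
    sepProd (Function.update f a φ) u = φ (u a) * ∏ e ∈ univ.erase a, f e (u e) := by
  rw [sepProd, ← mul_prod_erase univ _ (mem_univ a), Function.update_self]
  congr 1
  exact prod_congr rfl fun e he => by rw [Function.update_of_ne (ne_of_mem_erase he)]

theorem mul_sepProd_update (f : Fin m → ℝ → ℝ) (a : Fin m) (φ : ℝ → ℝ) (u : Fin m → ℝ) :
    f a (u a) * sepProd (Function.update f a φ) u = φ (u a) * sepProd f u := by
  rw [sepProd_update, sepProd, ← mul_prod_erase univ _ (mem_univ a)]
  ring

theorem hasFDerivAt_sepProd {f : Fin m → ℝ → ℝ} {u : Fin m → ℝ}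
    (hf : ∀ e, DifferentiableAt ℝ (f e) (u e)) :
    HasFDerivAt (sepProd f)
      (∑ e, sepProd (Function.update f e (deriv (f e))) u •
        ContinuousLinearMap.proj (R := ℝ) (φ := fun _ : Fin m => ℝ) e) u := by
  have h : ∀ e ∈ (univ : Finset (Fin m)), HasFDerivAt (fun v : Fin m → ℝ => f e (v e))
      (deriv (f e) (u e) • ContinuousLinearMap.proj (R := ℝ) (φ := fun _ : Fin m => ℝ) e) u :=
    fun e _ => (hf e).hasDerivAt.comp_hasFDerivAt u (hasFDerivAt_apply e u)
  refine (HasFDerivAt.finsetProd h).congr_fderiv (sum_congr rfl fun e _ => ?_)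
  rw [sepProd_update, smul_smul, mul_comm]

theorem pd_sepProd {f : Fin m → ℝ → ℝ} (hf : ∀ e, Differentiable ℝ (f e)) (a : Fin m) :
    pd a (sepProd f) = sepProd (Function.update f a (deriv (f a))) := by
  ext u
  rw [pd, (hasFDerivAt_sepProd fun e => (hf e) (u e)).fderiv]
  simp [Pi.single_apply]

theorem contDiff_sepProd {f : Fin m → ℝ → ℝ} {k : ℕ∞ω} (hf : ∀ e, ContDiff ℝ k (f e)) :
    ContDiff ℝ k (sepProd f) :=
  contDiff_prod fun e _ => (hf e).comp (contDiff_apply ℝ ℝ e)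

end SepProd

section Minkowski

variable {n : ℕ}

noncomputable def minkowskiSign (j : ℕ) : ℝ := if j = 0 then -1 else 1

noncomputable def minkowski (x y : Fin (n + 2) → ℝ) : ℝ :=
  ∑ j : Fin (n + 2), minkowskiSign j * (x j * y j)

theorem minkowski_comm (x y : Fin (n + 2) → ℝ) : minkowski x y = minkowski y x := by
  simp only [minkowski, mul_comm (x _)]

theorem minkowski_eq_sum_range (x y : ℕ → ℝ) :
    minkowski (fun j : Fin (n + 2) => x j) (fun j => y j)
      = ∑ j ∈ range (n + 2), minkowskiSign j * (x j * y j) :=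
  Fin.sum_univ_eq_sum_range (fun j => minkowskiSign j * (x j * y j)) (n + 2)

theorem pd_minkowski {m : ℕ} {X Y : Fin (n + 2) → (Fin m → ℝ) → ℝ} {u : Fin m → ℝ}
    (hX : ∀ j, DifferentiableAt ℝ (X j) u) (hY : ∀ j, DifferentiableAt ℝ (Y j) u) (a : Fin m) :
    pd a (fun v => minkowski (fun j => X j v) (fun j => Y j v)) u
      = minkowski (fun j => pd a (X j) u) (fun j => Y j u)
        + minkowski (fun j => X j u) (fun j => pd a (Y j) u) := by
  simp only [minkowski]
  rw [(HasFDerivAt.fun_sum fun j _ =>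
    ((hX j).hasFDerivAt.fun_mul (hY j).hasFDerivAt).const_mul (minkowskiSign j)).pd_eq]
  simp only [← sum_add_distrib, pd, _root_.sum_apply, smul_apply, add_apply,
    smul_eq_mul]
  exact sum_congr rfl fun j _ => by ring

end Minkowski

section Hyperboloid

variable {n : ℕ}

-- `hypCoord j u = ∏ e, hypFactor j e (u e)` is the `j`-th coordinate of the embedding:
-- `cosh u₀` for `j = 0`, `sinh u₀ sin u₁ ⋯ sin u_{j-1} cos u_j` for `0 < j ≤ n`, and
-- `sinh u₀ sin u₁ ⋯ sin u_n` for `j = n + 1`.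
noncomputable def hypFactor (j : ℕ) (e : Fin (n + 1)) : ℝ → ℝ :=
  if (e : ℕ) = 0 then (if j = 0 then cosh else sinh)
  else if (e : ℕ) < j then sin else if (e : ℕ) = j then cos else fun _ => 1

noncomputable def hypCoord (j : ℕ) : (Fin (n + 1) → ℝ) → ℝ := sepProd (hypFactor j)

noncomputable def sinProd (k : ℕ) (u : Fin (n + 1) → ℝ) : ℝ :=
  ∏ e ∈ univ.filter (fun e : Fin (n + 1) => 1 ≤ (e : ℕ) ∧ (e : ℕ) < k), sin (u e)

theorem contDiff_hypFactor (j : ℕ) (e : Fin (n + 1)) : ContDiff ℝ ∞ (hypFactor j e) := by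
  unfold hypFactor
  split_ifs
  exacts [contDiff_cosh, contDiff_sinh, contDiff_sin, contDiff_cos, contDiff_const]

theorem contDiff_hypCoord (j : ℕ) : ContDiff ℝ ∞ (hypCoord (n := n) j) :=
  contDiff_sepProd (contDiff_hypFactor j)

theorem differentiable_hypCoord (j : ℕ) : Differentiable ℝ (hypCoord (n := n) j) :=
  (contDiff_hypCoord j).differentiable (by simp)

theorem differentiable_pd_hypCoord (j : ℕ) (b : Fin (n + 1)) :
    Differentiable ℝ (pd b (hypCoord (n := n) j)) :=
  differentiable_pd (contDiff_infty.mp (contDiff_hypCoord j) 2) b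

theorem hypFactor_of_lt {j : ℕ} {e : Fin (n + 1)} (h : (e : ℕ) < j) :
    hypFactor j e = if (e : ℕ) = 0 then sinh else sin := by
  simp [hypFactor, h, show j ≠ 0 by omega]

theorem hypFactor_of_gt {j : ℕ} {e : Fin (n + 1)} (h : j < (e : ℕ)) :
    hypFactor j e = fun _ => 1 := by
  simp [hypFactor, show (e : ℕ) ≠ 0 by omega, h.not_gt, h.ne']

theorem hypFactor_last (a : Fin (n + 1)) : hypFactor (n + 1) a = if a = 0 then sinh else sin := by
  simp only [hypFactor_of_lt a.isLt, Fin.val_eq_zero_iff]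

theorem pd_hypCoord (j : ℕ) (a : Fin (n + 1)) :
    pd a (hypCoord j) = sepProd (Function.update (hypFactor j) a (deriv (hypFactor j a))) :=
  pd_sepProd (fun e => (contDiff_hypFactor j e).differentiable (by simp)) a

theorem pd_hypCoord_of_gt {j : ℕ} {a : Fin (n + 1)} (h : j < (a : ℕ)) (u : Fin (n + 1) → ℝ) :
    pd a (hypCoord j) u = 0 := by
  rw [pd_hypCoord, sepProd_update, hypFactor_of_gt h, deriv_const', zero_mul]

theorem mul_pd_hypCoord (j : ℕ) (a : Fin (n + 1)) (u : Fin (n + 1) → ℝ) :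
    hypFactor j a (u a) * pd a (hypCoord j) u = deriv (hypFactor j a) (u a) * hypCoord j u := by
  rw [pd_hypCoord, mul_sepProd_update, hypCoord]

theorem prod_hypFactor_of_ne {j : ℕ} (hj : j ≠ 0) (u : Fin (n + 1) → ℝ) :
    ∏ e ∈ univ.filter (fun e : Fin (n + 1) => (e : ℕ) ≠ j), hypFactor j e (u e)
      = sinh (u 0) * sinProd j u := by
  rw [sinProd, prod_filter, prod_filter, Fin.prod_univ_succ, Fin.prod_univ_succ]
  simp only [hypFactor, Fin.val_zero, Fin.val_succ]
  simp [hj, Ne.symm hj, -mul_eq_mul_left_iff]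
  congr 1
  refine prod_congr rfl fun e _ => ?_
  split_ifs <;> first | rfl | omega

theorem sepProd_update_hypFactor {a : Fin (n + 1)} (ha : a ≠ 0) (φ : ℝ → ℝ)
    (u : Fin (n + 1) → ℝ) :
    sepProd (Function.update (hypFactor a) a φ) u = sinh (u 0) * sinProd a u * φ (u a) := by
  have herase : univ.erase a = univ.filter (fun e : Fin (n + 1) => (e : ℕ) ≠ a) := by
    ext e; simp [Fin.val_eq_val]
  rw [sepProd_update, herase, prod_hypFactor_of_ne (Fin.val_ne_zero_iff.mpr ha), mul_comm]

theorem hypCoord_zero (u : Fin (n + 1) → ℝ) : hypCoord 0 u = cosh (u 0) := by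
  rw [hypCoord, sepProd, Fin.prod_univ_succ]
  simp [hypFactor]

theorem hypCoord_of_ne_zero {a : Fin (n + 1)} (ha : a ≠ 0) (u : Fin (n + 1) → ℝ) :
    hypCoord a u = sinh (u 0) * sinProd a u * cos (u a) := by
  have hcos : hypFactor a a = cos := by simp [hypFactor, Fin.val_ne_zero_iff.mpr ha]
  rw [← sepProd_update_hypFactor ha, ← hcos, Function.update_eq_self, hypCoord]

theorem hypCoord_last (u : Fin (n + 1) → ℝ) :
    hypCoord (n + 1) u = sinh (u 0) * sinProd (n + 1) u := by
  rw [← prod_hypFactor_of_ne (Nat.succ_ne_zero n), filter_true_of_mem fun e _ => e.isLt.ne]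
  rfl

theorem hypCoord_eq {i : ℕ} (hi : i ≤ n + 1) (u : Fin (n + 1) → ℝ) :
    hypCoord i u = if i = 0 then cosh (u 0)
      else sinh (u 0) * sinProd i u * (if h : i < n + 1 then cos (u ⟨i, h⟩) else 1) := by
  split_ifs with h0 h
  · rw [h0, hypCoord_zero]
  · exact hypCoord_of_ne_zero (a := ⟨i, h⟩) (Fin.val_ne_zero_iff.mp h0) u
  · rw [show i = n + 1 by omega, hypCoord_last, mul_one]

theorem abs_hypCoord_last (u : Fin (n + 1) → ℝ) :
    |hypCoord (n + 1) u|
      = |sinh (u 0)| * ∏ a ∈ univ.filter (fun a : Fin (n + 1) => 1 ≤ (a : ℕ)), |sin (u a)| := by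
  rw [hypCoord_last, abs_mul, sinProd, abs_prod]
  congr 2
  ext e
  simp only [mem_filter, mem_univ, true_and, e.isLt, and_true]

theorem hypFactor_last_ne_zero {u : Fin (n + 1) → ℝ} (hu : hypCoord (n + 1) u ≠ 0)
    (a : Fin (n + 1)) : hypFactor (n + 1) a (u a) ≠ 0 :=
  prod_ne_zero_iff.mp (show ∏ e, hypFactor (n + 1) e (u e) ≠ 0 from hu) a (mem_univ a)

theorem hypCoord_last_ne_zero {u : Fin (n + 1) → ℝ} (h0 : sinh (u 0) ≠ 0)
    (hsin : ∀ a : Fin (n + 1), 1 ≤ (a : ℕ) → sin (u a) ≠ 0) : hypCoord (n + 1) u ≠ 0 := by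
  rw [hypCoord_last]
  exact mul_ne_zero h0 (prod_ne_zero_iff.mpr fun e he => hsin e (mem_filter.mp he).2.1)

theorem sinProd_one (u : Fin (n + 1) → ℝ) : sinProd 1 u = 1 :=
  prod_eq_one fun e he => absurd (mem_filter.mp he).2 (by omega)

theorem sinProd_succ {a : Fin (n + 1)} (ha : a ≠ 0) (u : Fin (n + 1) → ℝ) :
    sinProd (a + 1) u = sinProd a u * sin (u a) := by
  have ha' := Fin.val_ne_zero_iff.mpr ha
  have hinsert : univ.filter (fun e : Fin (n + 1) => 1 ≤ (e : ℕ) ∧ (e : ℕ) < a + 1)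
      = insert a (univ.filter fun e : Fin (n + 1) => 1 ≤ (e : ℕ) ∧ (e : ℕ) < a) := by
    ext e; simp only [mem_filter, mem_univ, true_and, mem_insert, Fin.ext_iff]; omega
  rw [sinProd, hinsert, prod_insert (by simp), mul_comm, sinProd]

theorem sum_sq_hypCoord {k : ℕ} (hk : k ≠ 0) (hkn : k ≤ n + 1) (u : Fin (n + 1) → ℝ) :
    ∑ i ∈ range (n + 2 - k), hypCoord (i + k) u ^ 2 = (sinh (u 0) * sinProd k u) ^ 2 := by
  induction hkn using Nat.decreasingInduction with
  | self => simp [hypCoord_last]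
  | of_succ k hk' ih =>
    set a : Fin (n + 1) := ⟨k, hk'⟩
    have ha : a ≠ 0 := by simpa [a, Fin.ext_iff] using hk
    rw [show n + 2 - k = n + 2 - (k + 1) + 1 by omega, sum_range_succ']
    simp only [show ∀ i, i + 1 + k = i + (k + 1) from fun i => by omega]
    rw [ih (Nat.succ_ne_zero k), zero_add, show k = (a : ℕ) from rfl, sinProd_succ ha,
      hypCoord_of_ne_zero ha]
    linear_combination (sinh (u 0) * sinProd a u) ^ 2 * sin_sq_add_cos_sq (u a)

noncomputable def hypPoint (u : Fin (n + 1) → ℝ) : Fin (n + 2) → ℝ := fun j => hypCoord j u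

noncomputable def hypTangent (a : Fin (n + 1)) (u : Fin (n + 1) → ℝ) : Fin (n + 2) → ℝ :=
  fun j => pd a (hypCoord j) u

noncomputable def hypHessian (a b : Fin (n + 1)) (u : Fin (n + 1) → ℝ) : Fin (n + 2) → ℝ :=
  fun j => pd a (pd b (hypCoord j)) u

theorem minkowski_hypPoint_self (u : Fin (n + 1) → ℝ) :
    minkowski (hypPoint u) (hypPoint u) = -1 := by
  unfold hypPoint
  rw [minkowski_eq_sum_range (fun j => hypCoord j u) (fun j => hypCoord j u),
    sum_range_succ']
  have hsq := sum_sq_hypCoord (n := n) one_ne_zero (by omega) u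
  rw [show n + 2 - 1 = n + 1 from rfl, sinProd_one, mul_one] at hsq
  simp only [minkowskiSign, Nat.add_one_ne_zero, if_false, if_true, one_mul, ← sq, hsq,
    hypCoord_zero]
  linear_combination -cosh_sq_sub_sinh_sq (u 0)

theorem minkowski_hypPoint_hypTangent (b : Fin (n + 1)) (u : Fin (n + 1) → ℝ) :
    minkowski (hypPoint u) (hypTangent b u) = 0 := by
  have h : pd b (fun v => minkowski (hypPoint v) (hypPoint v)) u
      = minkowski (hypTangent b u) (hypPoint u) + minkowski (hypPoint u) (hypTangent b u) :=
    pd_minkowski (fun j => differentiable_hypCoord j u) (fun j => differentiable_hypCoord j u) b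
  have hc : (fun v : Fin (n + 1) → ℝ => minkowski (hypPoint v) (hypPoint v)) = fun _ => -1 :=
    funext minkowski_hypPoint_self
  rw [hc, pd_const, minkowski_comm (hypTangent b u)] at h
  linarith

theorem minkowski_hypTangent_add_minkowski_hypPoint_hypHessian (a b : Fin (n + 1))
    (u : Fin (n + 1) → ℝ) :
    minkowski (hypTangent a u) (hypTangent b u) + minkowski (hypPoint u) (hypHessian a b u)
      = 0 := by
  have h : pd a (fun v => minkowski (hypPoint v) (hypTangent b v)) u
      = minkowski (hypTangent a u) (hypTangent b u) + minkowski (hypPoint u) (hypHessian a b u) :=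
    pd_minkowski (fun j => differentiable_hypCoord j u)
      (fun j => differentiable_pd_hypCoord j b u) a
  have hc : (fun v : Fin (n + 1) → ℝ => minkowski (hypPoint v) (hypTangent b v)) = fun _ => 0 :=
    funext (minkowski_hypPoint_hypTangent b)
  rw [hc, pd_const] at h
  exact h.symm

theorem minkowski_hypTangent_of_lt {u : Fin (n + 1) → ℝ} (hu : hypCoord (n + 1) u ≠ 0)
    {a b : Fin (n + 1)} (hab : a < b) : minkowski (hypTangent a u) (hypTangent b u) = 0 := by
  -- For `j ≥ b > a` the `a`-th factor of `ξ_j` is `w` (`sinh` or `sin`), so `w ∂_a ξ_j = w' ξ_j`.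
  set w := hypFactor (n + 1) a
  have key : w (u a) * minkowski (hypTangent a u) (hypTangent b u)
      = deriv w (u a) * minkowski (hypPoint u) (hypTangent b u) := by
    simp only [minkowski, mul_sum]
    refine sum_congr rfl fun j _ => ?_
    rcases lt_or_ge (j : ℕ) b with hjb | hbj
    · simp only [hypTangent, pd_hypCoord_of_gt hjb, mul_zero]
    · have hw : hypFactor j a = w :=
        (hypFactor_of_lt (lt_of_lt_of_le hab hbj)).trans (hypFactor_of_lt a.isLt).symm
      have hexch := mul_pd_hypCoord j a u
      rw [hw] at hexch
      simp only [hypTangent, hypPoint]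
      linear_combination (minkowskiSign j * pd b (hypCoord j) u) * hexch
  rw [minkowski_hypPoint_hypTangent, mul_zero] at key
  exact (mul_eq_zero.mp key).resolve_left (hypFactor_last_ne_zero hu a)

theorem minkowski_hypTangent_zero_self {u : Fin (n + 1) → ℝ} (hu : sinh (u 0) ≠ 0) :
    minkowski (hypTangent 0 u) (hypTangent 0 u) = 1 := by
  have h00 : pd 0 (hypCoord 0) u = sinh (u 0) := by
    have hexch := mul_pd_hypCoord (n := n) 0 0 u
    simp only [hypFactor, Fin.val_zero, if_true, Real.deriv_cosh, hypCoord_zero] at hexch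
    exact mul_left_cancel₀ (cosh_pos _).ne' (hexch.trans (mul_comm _ _))
  have hexch : ∀ i : ℕ,
      sinh (u 0) * pd 0 (hypCoord (i + 1)) u = cosh (u 0) * hypCoord (i + 1) u := by
    intro i
    have h := mul_pd_hypCoord (n := n) (i + 1) 0 u
    rw [hypFactor_of_lt (e := 0) (Nat.succ_pos i)] at h
    simpa using h
  have hsq := sum_sq_hypCoord (n := n) one_ne_zero (by omega) u
  rw [show n + 2 - 1 = n + 1 from rfl, sinProd_one, mul_one] at hsq
  refine mul_left_cancel₀ (pow_ne_zero 2 hu) ?_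
  unfold hypTangent
  rw [minkowski_eq_sum_range (fun j => pd 0 (hypCoord j) u) (fun j => pd 0 (hypCoord j) u),
    sum_range_succ', mul_add, mul_sum]
  simp only [minkowskiSign, Nat.add_one_ne_zero, if_false, if_true, one_mul, h00]
  calc ∑ i ∈ range (n + 1), sinh (u 0) ^ 2 * (pd 0 (hypCoord (i + 1)) u * pd 0 (hypCoord (i + 1)) u)
        + sinh (u 0) ^ 2 * (-1 * (sinh (u 0) * sinh (u 0)))
      = cosh (u 0) ^ 2 * ∑ i ∈ range (n + 1), hypCoord (i + 1) u ^ 2 - sinh (u 0) ^ 4 := by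
        rw [mul_sum]
        congr 1
        · refine sum_congr rfl fun i _ => ?_
          linear_combination
            (sinh (u 0) * pd 0 (hypCoord (i + 1)) u + cosh (u 0) * hypCoord (i + 1) u) * hexch i
        · ring
    _ = sinh (u 0) ^ 2 * 1 := by
        rw [hsq]; linear_combination sinh (u 0) ^ 2 * cosh_sq_sub_sinh_sq (u 0)

theorem minkowski_hypTangent_self {u : Fin (n + 1) → ℝ} {a : Fin (n + 1)} (ha : a ≠ 0)
    (hu : sin (u a) ≠ 0) :
    minkowski (hypTangent a u) (hypTangent a u) = (sinh (u 0) * sinProd a u) ^ 2 := by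
  have ha' := Fin.val_ne_zero_iff.mpr ha
  have haa : pd a (hypCoord a) u = -(sinh (u 0) * sinProd a u * sin (u a)) := by
    have hcos : hypFactor (a : ℕ) a = cos := by simp [hypFactor, ha']
    rw [pd_hypCoord, sepProd_update_hypFactor ha, hcos, Real.deriv_cos']
    ring
  have hexch : ∀ i : ℕ,
      sin (u a) * pd a (hypCoord (a + (i + 1))) u = cos (u a) * hypCoord (a + (i + 1)) u := by
    intro i
    have h := mul_pd_hypCoord (a + (i + 1)) a u
    rwa [hypFactor_of_lt (by omega), if_neg ha', Real.deriv_sin] at h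
  have hsq : ∑ i ∈ range (n + 2 - (a + 1)), hypCoord (a + (i + 1)) u ^ 2
      = (sinh (u 0) * sinProd a u * sin (u a)) ^ 2 := by
    rw [mul_assoc, ← sinProd_succ ha, ← sum_sq_hypCoord (Nat.succ_ne_zero _) (by omega) u]
    exact sum_congr rfl fun i _ => by rw [show (a : ℕ) + (i + 1) = i + (a + 1) by omega]
  refine mul_left_cancel₀ (pow_ne_zero 2 hu) ?_
  unfold hypTangent
  rw [minkowski_eq_sum_range (fun j => pd a (hypCoord j) u) (fun j => pd a (hypCoord j) u),
    show n + 2 = a + (n + 2 - (a + 1) + 1) by omega, sum_range_add, sum_range_succ',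
    sum_eq_zero fun j hj => by rw [pd_hypCoord_of_gt (mem_range.mp hj), zero_mul, mul_zero]]
  simp only [minkowskiSign, if_neg ha', add_zero, one_mul, haa, zero_add, mul_add, mul_sum,
    Nat.add_eq_zero_iff, Nat.add_one_ne_zero, and_false, if_false]
  calc ∑ i ∈ range (n + 2 - (a + 1)), sin (u a) ^ 2 *
          (pd a (hypCoord (a + (i + 1))) u * pd a (hypCoord (a + (i + 1))) u)
        + sin (u a) ^ 2 * (-(sinh (u 0) * sinProd a u * sin (u a)) *
          -(sinh (u 0) * sinProd a u * sin (u a)))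
      = cos (u a) ^ 2 * ∑ i ∈ range (n + 2 - (a + 1)), hypCoord (a + (i + 1)) u ^ 2
        + sin (u a) ^ 2 * (sinh (u 0) * sinProd a u * sin (u a)) ^ 2 := by
        rw [mul_sum]
        congr 1
        · refine sum_congr rfl fun i _ => ?_
          linear_combination (sin (u a) * pd a (hypCoord (a + (i + 1))) u
            + cos (u a) * hypCoord (a + (i + 1)) u) * hexch i
        · ring
    _ = sin (u a) ^ 2 * (sinh (u 0) * sinProd a u) ^ 2 := by
        rw [hsq]
        linear_combination (sin (u a) * sinh (u 0) * sinProd a u) ^ 2 * cos_sq_add_sin_sq (u a)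

noncomputable def hypMetric (a : Fin (n + 1)) (u : Fin (n + 1) → ℝ) : ℝ :=
  if a = 0 then 1 else (sinh (u 0) * sinProd a u) ^ 2

theorem hypMetric_eq (a : Fin (n + 1)) (u : Fin (n + 1) → ℝ) :
    hypMetric a u = if (a : ℕ) = 0 then 1 else sinh (u 0) ^ 2 *
      ∏ e ∈ univ.filter (fun e : Fin (n + 1) => 1 ≤ (e : ℕ) ∧ (e : ℕ) < a), sin (u e) ^ 2 := by
  simp only [hypMetric, Fin.val_eq_zero_iff, sinProd, mul_pow, prod_pow]

theorem minkowski_hypTangent {u : Fin (n + 1) → ℝ} (hu : hypCoord (n + 1) u ≠ 0)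
    (a b : Fin (n + 1)) :
    minkowski (hypTangent a u) (hypTangent b u) = if a = b then hypMetric a u else 0 := by
  have hw := hypFactor_last_ne_zero hu
  rcases lt_trichotomy a b with hab | rfl | hab
  · rw [if_neg hab.ne, minkowski_hypTangent_of_lt hu hab]
  · rw [if_pos rfl, hypMetric]
    split_ifs with ha
    · subst ha
      exact minkowski_hypTangent_zero_self (by simpa [hypFactor_last] using hw 0)
    · exact minkowski_hypTangent_self ha (by simpa [hypFactor_last, ha] using hw a)
  · rw [if_neg hab.ne', minkowski_comm, minkowski_hypTangent_of_lt hu hab]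

theorem hypMetric_ne_zero {u : Fin (n + 1) → ℝ} (hu : hypCoord (n + 1) u ≠ 0) (a : Fin (n + 1)) :
    hypMetric a u ≠ 0 := by
  have hw := hypFactor_last_ne_zero hu
  unfold hypMetric
  split_ifs
  · exact one_ne_zero
  · refine pow_ne_zero 2 (mul_ne_zero (by simpa [hypFactor_last] using hw 0) ?_)
    refine prod_ne_zero_iff.mpr fun e he => ?_
    have he0 : e ≠ 0 := Fin.val_ne_zero_iff.mp (by simp at he; omega)
    simpa [hypFactor_last, he0] using hw e

theorem hypHessian_eq {u : Fin (n + 1) → ℝ} (hu : hypCoord (n + 1) u ≠ 0) (a b : Fin (n + 1)) :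
    hypHessian a b u = minkowski (hypTangent a u) (hypTangent b u) • hypPoint u
      + ∑ c, (minkowski (hypHessian a b u) (hypTangent c u) / hypMetric c u) • hypTangent c u := by
  let v : Fin (n + 2) → Fin (n + 2) → ℝ := Fin.cases (hypPoint u) fun c => hypTangent c u
  let d : Fin (n + 2) → ℝ := Fin.cases (-1) fun c => hypMetric c u
  have hv : ∀ i k, minkowski (v i) (v k) = if i = k then d i else 0 := by
    intro i k
    cases i using Fin.cases <;> cases k using Fin.cases <;>
      simp [v, d, minkowski_hypPoint_self, minkowski_hypPoint_hypTangent,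
        minkowski_comm _ (hypPoint u), minkowski_hypTangent hu, (Fin.succ_ne_zero _).symm]
  have hd : ∀ i, d i ≠ 0 := Fin.cases (by simp [d]) (hypMetric_ne_zero hu)
  have h := eq_sum_smul_of_orthogonal _ v d hv hd (hypHessian a b u)
  rw [Fin.sum_univ_succ] at h
  have hnormal : minkowski (hypHessian a b u) (hypPoint u)
      = -minkowski (hypTangent a u) (hypTangent b u) := by
    rw [minkowski_comm]
    linarith [minkowski_hypTangent_add_minkowski_hypPoint_hypHessian a b u]
  refine h.trans (congrArg₂ _ ?_ (sum_congr rfl fun c _ => ?_))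
  · change ((-1 : ℝ)⁻¹ * minkowski (hypHessian a b u) (hypPoint u)) • hypPoint u = _
    rw [hnormal, inv_neg, inv_one, neg_one_mul, neg_neg]
  · change ((hypMetric c u)⁻¹ * minkowski (hypHessian a b u) (hypTangent c u)) • hypTangent c u = _
    rw [inv_mul_eq_div]

theorem pd_pd_hypCoord_last {u : Fin (n + 1) → ℝ} (hu : hypCoord (n + 1) u ≠ 0)
    (a b : Fin (n + 1)) :
    pd a (pd b (hypCoord (n + 1))) u
      = minkowski (hypTangent a u) (hypTangent b u) * hypCoord (n + 1) u
        + ∑ c, minkowski (hypHessian a b u) (hypTangent c u) / hypMetric c u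
          * pd c (hypCoord (n + 1)) u := by
  have h := congrFun (hypHessian_eq hu a b) (Fin.last (n + 1))
  simpa only [hypHessian, hypPoint, hypTangent, Fin.val_last, Pi.add_apply, Pi.smul_apply,
    smul_eq_mul, Finset.sum_apply] using h

theorem sum_pd_pd_mul_pd_eq_minkowski (r rd : ℝ) (a b c : Fin (n + 1)) (u : Fin (n + 1) → ℝ) :
    ∑ j : Fin (n + 2), pd a (fun v => pd b (fun w => rd * hypCoord j w) v) u
        * pd c (fun w => (if (j : ℕ) = 0 then -r else r) * hypCoord j w) u
      = r * rd * minkowski (hypHessian a b u) (hypTangent c u) := by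
  simp only [pd_const_mul, minkowski, hypHessian, hypTangent, mul_sum]
  refine sum_congr rfl fun j _ => ?_
  simp only [minkowskiSign]
  split_ifs <;> ring

end Hyperboloid

/-- for the hyperboloid model with metric `g_{11} = r r†`,
`g_{ab} = δ_{ab} r r† sinh² u^1 ∏_{2≤c≤a} sin² u^{c−1}` and constant mixture curvature
`−1/(r r†)`, the gauge function `ν(u) = 1/(|sinh u^1| ∏_{a≥2} |sin u^a|)` solves
`∂_a s_b − Γ^{(−1)c}_{ab} s_c − s_a s_b = −(1/(r r†)) g_{ab}`, `s_a = ∂_a log ν`. -/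
theorem stmt19 {m : ℕ} (hm : 0 < m) (r rd : ℝ) (hr : 0 < r) (hrd : 1 < rd)
    (ξ : Fin (m + 1) → (Fin m → ℝ) → ℝ)
    (hξ : ∀ i u, ξ i u =
      if (i : ℕ) = 0 then Real.cosh (u ⟨0, hm⟩)
      else Real.sinh (u ⟨0, hm⟩) *
        (∏ e ∈ Finset.univ.filter (fun e : Fin m => 1 ≤ (e : ℕ) ∧ (e : ℕ) < (i : ℕ)),
          Real.sin (u e)) *
        (if h : (i : ℕ) < m then Real.cos (u ⟨i, h⟩) else 1))
    (θ η : Fin (m + 1) → (Fin m → ℝ) → ℝ)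
    (hθ : ∀ i u, θ i u = (if (i : ℕ) = 0 then -r else r) * ξ i u)
    (hη : ∀ i u, η i u = rd * ξ i u)
    (D : Set (Fin m → ℝ))
    (hD : D = {u | Real.sinh (u ⟨0, hm⟩) ≠ 0 ∧
      ∀ a : Fin m, 1 ≤ (a : ℕ) → Real.sin (u a) ≠ 0})
    (g ginv : Fin m → Fin m → (Fin m → ℝ) → ℝ)
    (hg : ∀ a b u, g a b u = (if a = b then
      r * rd * (if (a : ℕ) = 0 then 1 else Real.sinh (u ⟨0, hm⟩) ^ 2 *
        ∏ e ∈ Finset.univ.filter (fun e : Fin m => 1 ≤ (e : ℕ) ∧ (e : ℕ) < (a : ℕ)),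
          Real.sin (u e) ^ 2) else 0))
    (hginv : ∀ a b u, ginv a b u = (if a = b then
      (r * rd * (if (a : ℕ) = 0 then 1 else Real.sinh (u ⟨0, hm⟩) ^ 2 *
        ∏ e ∈ Finset.univ.filter (fun e : Fin m => 1 ≤ (e : ℕ) ∧ (e : ℕ) < (a : ℕ)),
          Real.sin (u e) ^ 2))⁻¹ else 0))
    (Γ : Fin m → Fin m → Fin m → (Fin m → ℝ) → ℝ)
    (hΓ : ∀ a b c u, Γ a b c u = ∑ j, pd a (fun v => pd b (η j) v) u * pd c (θ j) u)
    (ν : (Fin m → ℝ) → ℝ)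
    (hν : ∀ u, ν u = 1 / (|Real.sinh (u ⟨0, hm⟩)| *
      ∏ a ∈ Finset.univ.filter (fun a : Fin m => 1 ≤ (a : ℕ)), |Real.sin (u a)|))
    (s : Fin m → (Fin m → ℝ) → ℝ)
    (hs : ∀ a u, s a u = pd a (fun v => Real.log (ν v)) u) :
    ∀ a b, ∀ u ∈ D,
      pd a (s b) u - (∑ c, (∑ e, Γ a b e u * ginv e c u) * s c u) - s a u * s b u
        = -(1 / (r * rd)) * g a b u := by
  obtain ⟨n, rfl⟩ := Nat.exists_eq_add_one_of_ne_zero hm.ne'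
  simp only [show (⟨0, hm⟩ : Fin (n + 1)) = 0 from rfl, ← hypMetric_eq,
    ← abs_hypCoord_last] at hξ hD hg hginv hν
  obtain rfl : ξ = fun i : Fin (n + 2) => hypCoord i :=
    funext₂ fun i v => by rw [hξ, hypCoord_eq (by omega)]; rfl
  obtain rfl : η = fun (i : Fin (n + 2)) v => rd * hypCoord i v := funext₂ hη
  obtain rfl : θ = fun (i : Fin (n + 2)) v => (if (i : ℕ) = 0 then -r else r) * hypCoord i v :=
    funext₂ hθ
  subst hD
  rintro a b u ⟨hsinh, hsin⟩
  have hu := hypCoord_last_ne_zero hsinh hsin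
  have hrrd : r * rd ≠ 0 := (mul_pos hr (zero_lt_one.trans hrd)).ne'
  have hconn : ∀ c, ∑ e, Γ a b e u * ginv e c u
      = minkowski (hypHessian a b u) (hypTangent c u) / hypMetric c u := by
    intro c
    simp only [hginv, hΓ, sum_pd_pd_mul_pd_eq_minkowski, mul_ite, mul_zero, sum_ite_eq',
      mem_univ, if_true]
    field_simp
  have hs' : ∀ c, s c = pd c fun v => -log (hypCoord (n + 1) v) := fun c =>
    funext fun v => by simp only [hs, hν, one_div, log_inv, log_abs]
  simp only [hconn]
  rw [gauge_equation_of_pd_pd_eq (contDiff_infty.mp (contDiff_hypCoord _) 2) hu hs'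
    (pd_pd_hypCoord_last hu a b), hg, minkowski_hypTangent hu]
  split_ifs
  · field_simp
  · simp
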